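/- Conservativeness of the Horvitz–Thompson variance estimator (Lemma 2): under the stepped-wedge randomization, E[V̂ar(τ̂)] ≥ Var(τ̂), where τ̂ = τ̂1 − τ̂0 and V̂ar(τ̂) = V̂ar(τ̂1) + V̂ar(τ̂0) − 2·Ĉov, with V̂ar(τ̂1), V̂ar(τ̂0) and Ĉov defined in the context. -/

import Mathlib

open Finset
open scoped Classical

noncomputable section

/-- Probability of an event under the uniform random permutation of `Fin I`
(each of the `I!` permutations has probability `1/I!`). -/
def swProb (I : ℕ) (p : Equiv.Perm (Fin I) → Prop) : ℝ :=
  ((Finset.univ.filter p).card : ℝ) / (Nat.factorial I : ℝ)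

/-- Expectation of a real statistic under the uniform random permutation of `Fin I`. -/
def swExp (I : ℕ) (f : Equiv.Perm (Fin I) → ℝ) : ℝ :=
  (∑ σ : Equiv.Perm (Fin I), f σ) / (Nat.factorial I : ℝ)

/-- Variance with respect to the uniform random permutation. -/
def swVar (I : ℕ) (f : Equiv.Perm (Fin I) → ℝ) : ℝ :=
  swExp I (fun σ => (f σ - swExp I f) ^ 2)

/-- Covariance with respect to the uniform random permutation. -/
def swCov (I : ℕ) (f g : Equiv.Perm (Fin I) → ℝ) : ℝ :=
  swExp I (fun σ => (f σ - swExp I f) * (g σ - swExp I g))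

/-- Treatment indicator: cluster `i` is treated in period `j` iff its position
`σ(i) + 1` (in `{1,…,I}`) is at most the treated count `T j`. -/
def swZ (I : ℕ) (T : ℕ → ℕ) (σ : Equiv.Perm (Fin I)) (i : Fin I) (j : ℕ) : ℕ :=
  if (σ i : ℕ) < T j then 1 else 0

/-- Cluster-level propensity score `e_j = I_j / I`. -/
def swE (I : ℕ) (T : ℕ → ℕ) (j : ℕ) : ℝ := (T j : ℝ) / (I : ℝ)

/-- Joint probability that both cluster-periods are treated. -/
def swE11 (I : ℕ) (T : ℕ → ℕ) (p q : Fin I × ℕ) : ℝ :=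
  swProb I (fun σ => swZ I T σ p.1 p.2 = 1 ∧ swZ I T σ q.1 q.2 = 1)

/-- Joint probability that both cluster-periods are untreated. -/
def swE00 (I : ℕ) (T : ℕ → ℕ) (p q : Fin I × ℕ) : ℝ :=
  swProb I (fun σ => swZ I T σ p.1 p.2 = 0 ∧ swZ I T σ q.1 q.2 = 0)

/-- Joint probability that the first cluster-period is treated and the second untreated. -/
def swE10 (I : ℕ) (T : ℕ → ℕ) (p q : Fin I × ℕ) : ℝ :=
  swProb I (fun σ => swZ I T σ p.1 p.2 = 1 ∧ swZ I T σ q.1 q.2 = 0)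

/-- Treated-arm Horvitz–Thompson estimator. -/
def tauHat1 (I J : ℕ) (T : ℕ → ℕ) (N : ℝ) (r1 : Fin I → ℕ → ℝ)
    (σ : Equiv.Perm (Fin I)) : ℝ :=
  (1 / N) * ∑ i : Fin I, ∑ j ∈ Finset.Icc 1 J, (swZ I T σ i j : ℝ) * r1 i j / swE I T j

/-- Control-arm Horvitz–Thompson estimator. -/
def tauHat0 (I J : ℕ) (T : ℕ → ℕ) (N : ℝ) (r0 : Fin I → ℕ → ℝ)
    (σ : Equiv.Perm (Fin I)) : ℝ :=
  (1 / N) * ∑ i : Fin I, ∑ j ∈ Finset.Icc 1 J,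
    (1 - (swZ I T σ i j : ℝ)) * r0 i j / (1 - swE I T j)

/-- Horvitz–Thompson estimator of the residualized average treatment effect. -/
def tauHatD (I J : ℕ) (T : ℕ → ℕ) (N : ℝ) (r1 r0 : Fin I → ℕ → ℝ)
    (σ : Equiv.Perm (Fin I)) : ℝ :=
  (1 / N) * ∑ i : Fin I, ∑ j ∈ Finset.Icc 1 J,
    ((swZ I T σ i j : ℝ) * r1 i j / swE I T j
      - (1 - (swZ I T σ i j : ℝ)) * r0 i j / (1 - swE I T j))

/-- Treated-arm variance estimator. -/
def varHat1 (I J : ℕ) (T : ℕ → ℕ) (N : ℝ) (r1 : Fin I → ℕ → ℝ)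
    (σ : Equiv.Perm (Fin I)) : ℝ :=
  (1 / N ^ 2) *
    ((∑ p ∈ Finset.univ ×ˢ Finset.Icc 1 J,
        (swZ I T σ p.1 p.2 : ℝ) * ((1 - swE I T p.2) / (swE I T p.2) ^ 2) * (r1 p.1 p.2) ^ 2)
      + (∑ p ∈ Finset.univ ×ˢ Finset.Icc 1 J, ∑ q ∈ Finset.univ ×ˢ Finset.Icc 1 J,
          if p ≠ q ∧ 0 < swE11 I T p q then
            (swZ I T σ p.1 p.2 : ℝ) * (swZ I T σ q.1 q.2 : ℝ) *
              ((swE11 I T p q - swE I T p.2 * swE I T q.2) /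
                (swE11 I T p q * swE I T p.2 * swE I T q.2)) *
              r1 p.1 p.2 * r1 q.1 q.2
          else 0)
      + (∑ p ∈ Finset.univ ×ˢ Finset.Icc 1 J, ∑ q ∈ Finset.univ ×ˢ Finset.Icc 1 J,
          if p ≠ q ∧ swE11 I T p q = 0 then
            (swZ I T σ p.1 p.2 : ℝ) * (r1 p.1 p.2) ^ 2 / (2 * swE I T p.2)
              + (swZ I T σ q.1 q.2 : ℝ) * (r1 q.1 q.2) ^ 2 / (2 * swE I T q.2)
          else 0))

/-- Control-arm variance estimator. -/
def varHat0 (I J : ℕ) (T : ℕ → ℕ) (N : ℝ) (r0 : Fin I → ℕ → ℝ)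
    (σ : Equiv.Perm (Fin I)) : ℝ :=
  (1 / N ^ 2) *
    ((∑ p ∈ Finset.univ ×ˢ Finset.Icc 1 J,
        (1 - (swZ I T σ p.1 p.2 : ℝ)) * (swE I T p.2 / (1 - swE I T p.2) ^ 2) * (r0 p.1 p.2) ^ 2)
      + (∑ p ∈ Finset.univ ×ˢ Finset.Icc 1 J, ∑ q ∈ Finset.univ ×ˢ Finset.Icc 1 J,
          if p ≠ q ∧ 0 < swE00 I T p q then
            (1 - (swZ I T σ p.1 p.2 : ℝ)) * (1 - (swZ I T σ q.1 q.2 : ℝ)) *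
              ((swE00 I T p q - (1 - swE I T p.2) * (1 - swE I T q.2)) /
                (swE00 I T p q * (1 - swE I T p.2) * (1 - swE I T q.2))) *
              r0 p.1 p.2 * r0 q.1 q.2
          else 0)
      + (∑ p ∈ Finset.univ ×ˢ Finset.Icc 1 J, ∑ q ∈ Finset.univ ×ˢ Finset.Icc 1 J,
          if p ≠ q ∧ swE00 I T p q = 0 then
            (1 - (swZ I T σ p.1 p.2 : ℝ)) * (r0 p.1 p.2) ^ 2 / (2 * (1 - swE I T p.2))
              + (1 - (swZ I T σ q.1 q.2 : ℝ)) * (r0 q.1 q.2) ^ 2 / (2 * (1 - swE I T q.2))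
          else 0))

/-- Covariance estimator. -/
def covHat (I J : ℕ) (T : ℕ → ℕ) (N : ℝ) (r1 r0 : Fin I → ℕ → ℝ)
    (σ : Equiv.Perm (Fin I)) : ℝ :=
  -(1 / N ^ 2) *
      (∑ p ∈ Finset.univ ×ˢ Finset.Icc 1 J, ∑ q ∈ Finset.univ ×ˢ Finset.Icc 1 J,
        if swE10 I T p q = 0 then
          (swZ I T σ p.1 p.2 : ℝ) * (r1 p.1 p.2) ^ 2 / (2 * swE I T p.2)
            + (1 - (swZ I T σ q.1 q.2 : ℝ)) * (r0 q.1 q.2) ^ 2 / (2 * (1 - swE I T q.2))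
        else 0)
    + (1 / N ^ 2) *
      (∑ p ∈ Finset.univ ×ˢ Finset.Icc 1 J, ∑ q ∈ Finset.univ ×ˢ Finset.Icc 1 J,
        if p ≠ q ∧ 0 < swE10 I T p q then
          (swZ I T σ p.1 p.2 : ℝ) * (1 - (swZ I T σ q.1 q.2 : ℝ)) *
            ((swE10 I T p q - swE I T p.2 * (1 - swE I T q.2)) /
              (swE10 I T p q * swE I T p.2 * (1 - swE I T q.2))) *
            r1 p.1 p.2 * r0 q.1 q.2
        else 0)

/-- The adoption period of a cluster placed `l`-th in line:
`P_l = min { j ∈ {1,…,J} : l ≤ I_j }` if `l ≤ I_J`, and `J + 1` otherwise. -/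
def swP (J : ℕ) (T : ℕ → ℕ) (l : ℕ) : ℕ :=
  if l ≤ T J then sInf {j | 1 ≤ j ∧ j ≤ J ∧ l ≤ T j} else J + 1

/-- The combinatorial matrix entry `c(i, l)`. -/
def swC (I J : ℕ) (T : ℕ → ℕ) (N : ℝ) (r1 r0 : Fin I → ℕ → ℝ)
    (i : Fin I) (l : ℕ) : ℝ :=
  (1 / N) * ((∑ j ∈ Finset.Icc (swP J T l) J, r1 i j / swE I T j)
    - ∑ j ∈ Finset.Icc 1 (swP J T l - 1), r0 i j / (1 - swE I T j))



/-! ### Auxiliary lemmas -/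

section auxBasic
variable (I : ℕ)

lemma auxFactPos : (0:ℝ) < (Nat.factorial I : ℝ) := by
  exact_mod_cast Nat.factorial_pos I

lemma auxCardPerm : (Finset.univ : Finset (Equiv.Perm (Fin I))).card = Nat.factorial I := by
  simp [Finset.card_univ, Fintype.card_perm]

lemma swExp_congr (f g : Equiv.Perm (Fin I) → ℝ) (h : ∀ σ, f σ = g σ) :
    swExp I f = swExp I g := by
  unfold swExp; rw [Finset.sum_congr rfl (fun σ _ => h σ)]

lemma swExp_const (c : ℝ) : swExp I (fun _ => c) = c := by
  rw [swExp, Finset.sum_const, auxCardPerm, nsmul_eq_mul]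
  rw [mul_comm, mul_div_assoc, div_self (ne_of_gt (auxFactPos I)), mul_one]

lemma swExp_add (f g : Equiv.Perm (Fin I) → ℝ) :
    swExp I (fun σ => f σ + g σ) = swExp I f + swExp I g := by
  simp [swExp, Finset.sum_add_distrib, add_div]

lemma swExp_sub (f g : Equiv.Perm (Fin I) → ℝ) :
    swExp I (fun σ => f σ - g σ) = swExp I f - swExp I g := by
  simp [swExp, Finset.sum_sub_distrib, div_sub_div_same]

lemma swExp_const_mul (c : ℝ) (f : Equiv.Perm (Fin I) → ℝ) :
    swExp I (fun σ => c * f σ) = c * swExp I f := by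
  simp [swExp, ← Finset.mul_sum, mul_div_assoc]

lemma swExp_mul_const (c : ℝ) (f : Equiv.Perm (Fin I) → ℝ) :
    swExp I (fun σ => f σ * c) = swExp I f * c := by
  simp [swExp, ← Finset.sum_mul]
  ring

lemma swExp_div_const (c : ℝ) (f : Equiv.Perm (Fin I) → ℝ) :
    swExp I (fun σ => f σ / c) = swExp I f / c := by
  simp only [div_eq_mul_inv]
  exact swExp_mul_const I c⁻¹ f

lemma swExp_sum {α : Type*} (s : Finset α) (f : α → Equiv.Perm (Fin I) → ℝ) :
    swExp I (fun σ => ∑ a ∈ s, f a σ) = ∑ a ∈ s, swExp I (f a) := by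
  unfold swExp
  rw [← Finset.sum_div, Finset.sum_comm]

lemma swExp_if (c : Prop) [Decidable c] (f : Equiv.Perm (Fin I) → ℝ) :
    swExp I (fun σ => if c then f σ else 0) = if c then swExp I f else 0 := by
  by_cases h : c <;> simp [h, swExp]

lemma swExp_indicator (p : Equiv.Perm (Fin I) → Prop) [DecidablePred p] :
    swExp I (fun σ => if p σ then (1:ℝ) else 0) = swProb I p := by
  unfold swExp swProb
  rw [Finset.sum_boole]
  congr

lemma swProb_eq (p : Equiv.Perm (Fin I) → Prop) [DecidablePred p] :
    swProb I p = ((Finset.univ.filter p).card : ℝ) / (Nat.factorial I : ℝ) := by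
  unfold swProb
  congr

lemma swProb_nonneg (p : Equiv.Perm (Fin I) → Prop) : 0 ≤ swProb I p := by
  unfold swProb; positivity

lemma swProb_congr (p q : Equiv.Perm (Fin I) → Prop) (h : ∀ σ, p σ ↔ q σ) :
    swProb I p = swProb I q := by
  unfold swProb
  have : Finset.univ.filter p = Finset.univ.filter q :=
    Finset.filter_congr (fun σ _ => by simpa using h σ)
  rw [this]

lemma swProb_false (p : Equiv.Perm (Fin I) → Prop) (h : ∀ σ, ¬ p σ) : swProb I p = 0 := by
  unfold swProb
  rw [Finset.filter_false_of_mem (fun σ _ => h σ)]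
  simp

lemma swVar_eq (f : Equiv.Perm (Fin I) → ℝ) :
    swVar I f = swExp I (fun σ => f σ * f σ) - swExp I f * swExp I f := by
  unfold swVar
  rw [swExp_congr I _
      (fun σ => (fun σ => f σ * f σ - (2 * swExp I f) * f σ) σ + (swExp I f * swExp I f))
      (fun σ => by simp only; ring)]
  rw [swExp_add, swExp_sub, swExp_const_mul, swExp_const]
  ring

lemma swExp_comb4 (c1 c2 c3 c4 : ℝ) (g1 g2 g3 g4 : Equiv.Perm (Fin I) → ℝ) :
    swExp I (fun σ => c1 * g1 σ - c2 * g2 σ - c3 * g3 σ + c4 * g4 σ)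
      = c1 * swExp I g1 - c2 * swExp I g2 - c3 * swExp I g3 + c4 * swExp I g4 := by
  unfold swExp
  rw [Finset.sum_add_distrib, Finset.sum_sub_distrib, Finset.sum_sub_distrib,
    ← Finset.mul_sum, ← Finset.mul_sum, ← Finset.mul_sum, ← Finset.mul_sum]
  ring

lemma swVar_const_mul (c : ℝ) (f : Equiv.Perm (Fin I) → ℝ) :
    swVar I (fun σ => c * f σ) = c^2 * swVar I f := by
  rw [swVar_eq, swVar_eq, swExp_const_mul]
  rw [swExp_congr I (fun σ => (c * f σ) * (c * f σ)) (fun σ => c^2 * (f σ * f σ))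
      (fun σ => by ring), swExp_const_mul]
  ring

lemma swVar_sum {α : Type*} (s : Finset α) (f : α → Equiv.Perm (Fin I) → ℝ) :
    swVar I (fun σ => ∑ a ∈ s, f a σ)
      = ∑ a ∈ s, ∑ b ∈ s,
          (swExp I (fun σ => f a σ * f b σ) - swExp I (f a) * swExp I (f b)) := by
  rw [swVar_eq]
  rw [swExp_congr I _ (fun σ => ∑ a ∈ s, ∑ b ∈ s, f a σ * f b σ)
      (fun σ => by rw [Finset.sum_mul_sum])]
  rw [swExp_sum, Finset.sum_congr rfl (fun a _ => swExp_sum I s (fun b σ => f a σ * f b σ)),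
    swExp_sum, Finset.sum_mul_sum, ← Finset.sum_sub_distrib]
  exact Finset.sum_congr rfl (fun a _ => by rw [← Finset.sum_sub_distrib])

end auxBasic

section auxCount
variable {I : ℕ}

lemma auxCardFiberEq (i : Fin I) (k k' : Fin I) :
    (Finset.univ.filter fun σ : Equiv.Perm (Fin I) => σ i = k).card
      = (Finset.univ.filter fun σ : Equiv.Perm (Fin I) => σ i = k').card := by
  apply Finset.card_bij' (fun σ _ => (Equiv.swap k k') * σ) (fun σ _ => (Equiv.swap k k') * σ)
  · intro σ hσ
    simp only [Finset.mem_filter, Finset.mem_univ, true_and] at hσ ⊢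
    simp [Equiv.Perm.mul_apply, hσ, Equiv.swap_apply_left]
  · intro σ hσ
    simp only [Finset.mem_filter, Finset.mem_univ, true_and] at hσ ⊢
    simp [Equiv.Perm.mul_apply, hσ, Equiv.swap_apply_right]
  · intro σ _; simp [← mul_assoc]
  · intro σ _; simp [← mul_assoc]

lemma auxSumFiber (i : Fin I) :
    ∑ k : Fin I, (Finset.univ.filter fun σ : Equiv.Perm (Fin I) => σ i = k).card
      = Nat.factorial I := by
  have h := Finset.card_eq_sum_card_fiberwise (s := (Finset.univ : Finset (Equiv.Perm (Fin I))))
      (f := fun σ : Equiv.Perm (Fin I) => σ i) (t := Finset.univ) (fun x _ => Finset.mem_univ _)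
  rw [Finset.card_univ, Fintype.card_perm, Fintype.card_fin] at h
  exact h.symm

lemma auxCardFinFilterLt (t : ℕ) (ht : t ≤ I) :
    (Finset.univ.filter fun k : Fin I => (k : ℕ) < t).card = t := by
  have himg : (Finset.univ.filter fun k : Fin I => (k : ℕ) < t).image (Fin.val)
      = Finset.range t := by
    ext a
    simp only [Finset.mem_image, Finset.mem_filter, Finset.mem_univ, true_and, Finset.mem_range]
    constructor
    · rintro ⟨k, hk, rfl⟩; exact hk
    · intro ha; exact ⟨⟨a, lt_of_lt_of_le ha ht⟩, ha, rfl⟩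
  rw [← Finset.card_image_of_injective _ Fin.val_injective, himg, Finset.card_range]

lemma auxCardLtFiber (i : Fin I) (t : ℕ) (ht : t ≤ I) :
    (Finset.univ.filter fun σ : Equiv.Perm (Fin I) => (σ i : ℕ) < t).card * I
      = t * Nat.factorial I := by
  by_cases hI : I = 0
  · subst hI; simp at ht; simp [ht]
  have hI0 : 0 < I := Nat.pos_of_ne_zero hI
  set k0 : Fin I := ⟨0, hI0⟩
  set c := (Finset.univ.filter fun σ : Equiv.Perm (Fin I) => σ i = k0).card with hc
  have hIc : I * c = Nat.factorial I := by
    rw [← auxSumFiber i]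
    rw [Finset.sum_congr rfl (fun k _ => auxCardFiberEq i k k0)]
    simp [Finset.card_univ, mul_comm, hc]
  have hcard : (Finset.univ.filter fun σ : Equiv.Perm (Fin I) => (σ i : ℕ) < t).card = t * c := by
    rw [Finset.card_eq_sum_card_fiberwise (f := fun σ : Equiv.Perm (Fin I) => σ i)
        (t := Finset.univ.filter fun k : Fin I => (k : ℕ) < t)
        (fun σ hσ => by
          simp only [Finset.mem_coe, Finset.mem_filter, Finset.mem_univ, true_and] at hσ ⊢; exact hσ)]
    have hfib : ∀ b ∈ (Finset.univ.filter fun k : Fin I => (k : ℕ) < t),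
        ((Finset.univ.filter fun σ : Equiv.Perm (Fin I) => (σ i : ℕ) < t).filter
          fun σ => σ i = b).card = c := by
      intro b hb
      simp only [Finset.mem_filter, Finset.mem_univ, true_and] at hb
      rw [Finset.filter_filter]
      have heq : (Finset.univ.filter fun σ : Equiv.Perm (Fin I) => ((σ i : ℕ) < t ∧ σ i = b))
          = Finset.univ.filter fun σ : Equiv.Perm (Fin I) => σ i = b := by
        apply Finset.filter_congr
        intro σ _
        constructor
        · exact fun h => h.2
        · exact fun h => ⟨by rw [h]; exact hb, h⟩
      rw [heq, auxCardFiberEq i b k0]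
    rw [Finset.sum_congr rfl hfib, Finset.sum_const, auxCardFinFilterLt t ht, smul_eq_mul]
  rw [hcard]
  calc t * c * I = t * (I * c) := by ring
    _ = t * Nat.factorial I := by rw [hIc]

end auxCount

section auxModel
variable (I : ℕ) (T : ℕ → ℕ)

lemma swZ_one_iff (σ : Equiv.Perm (Fin I)) (i : Fin I) (j : ℕ) :
    swZ I T σ i j = 1 ↔ (σ i : ℕ) < T j := by
  unfold swZ; split <;> simp_all

lemma swZ_zero_iff (σ : Equiv.Perm (Fin I)) (i : Fin I) (j : ℕ) :
    swZ I T σ i j = 0 ↔ ¬ (σ i : ℕ) < T j := by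
  unfold swZ; split <;> simp_all

lemma swExp_z (hI : 0 < I) (i : Fin I) (j : ℕ) (hT : T j ≤ I) :
    swExp I (fun σ => (swZ I T σ i j : ℝ)) = swE I T j := by
  rw [swExp_congr I _ (fun σ => if (σ i : ℕ) < T j then (1:ℝ) else 0)
      (fun σ => by unfold swZ; by_cases h : (σ i : ℕ) < T j <;> simp [h])]
  rw [swExp_indicator, swProb_eq]
  unfold swE
  have h := auxCardLtFiber i (T j) hT
  have hI' : (0:ℝ) < I := by exact_mod_cast hI
  have hf := auxFactPos I
  rw [div_eq_div_iff hf.ne' hI'.ne']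
  exact_mod_cast congrArg (Nat.cast : ℕ → ℝ) h

lemma swExp_omz (hI : 0 < I) (i : Fin I) (j : ℕ) (hT : T j ≤ I) :
    swExp I (fun σ => 1 - (swZ I T σ i j : ℝ)) = 1 - swE I T j := by
  rw [swExp_sub I (fun _ => (1:ℝ)) (fun σ => (swZ I T σ i j : ℝ)), swExp_const,
    swExp_z I T hI i j hT]

lemma swExp_zz (p q : Fin I × ℕ) :
    swExp I (fun σ => (swZ I T σ p.1 p.2 : ℝ) * (swZ I T σ q.1 q.2 : ℝ)) = swE11 I T p q := by
  rw [swExp_congr I _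
      (fun σ => if ((σ p.1 : ℕ) < T p.2 ∧ (σ q.1 : ℕ) < T q.2) then (1:ℝ) else 0)
      (fun σ => by
        unfold swZ
        by_cases h1 : (σ p.1 : ℕ) < T p.2 <;> by_cases h2 : (σ q.1 : ℕ) < T q.2 <;>
          simp [h1, h2])]
  rw [swExp_indicator]
  exact swProb_congr I _ _ (fun σ => by
    rw [swZ_one_iff, swZ_one_iff])

lemma swExp_z10 (p q : Fin I × ℕ) :
    swExp I (fun σ => (swZ I T σ p.1 p.2 : ℝ) * (1 - (swZ I T σ q.1 q.2 : ℝ)))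
      = swE10 I T p q := by
  rw [swExp_congr I _
      (fun σ => if ((σ p.1 : ℕ) < T p.2 ∧ ¬ (σ q.1 : ℕ) < T q.2) then (1:ℝ) else 0)
      (fun σ => by
        unfold swZ
        by_cases h1 : (σ p.1 : ℕ) < T p.2 <;> by_cases h2 : (σ q.1 : ℕ) < T q.2 <;>
          simp [h1, h2])]
  rw [swExp_indicator]
  exact swProb_congr I _ _ (fun σ => by
    rw [swZ_one_iff, swZ_zero_iff])

lemma swExp_z00 (p q : Fin I × ℕ) :
    swExp I (fun σ => (1 - (swZ I T σ p.1 p.2 : ℝ)) * (1 - (swZ I T σ q.1 q.2 : ℝ)))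
      = swE00 I T p q := by
  rw [swExp_congr I _
      (fun σ => if (¬ (σ p.1 : ℕ) < T p.2 ∧ ¬ (σ q.1 : ℕ) < T q.2) then (1:ℝ) else 0)
      (fun σ => by
        unfold swZ
        by_cases h1 : (σ p.1 : ℕ) < T p.2 <;> by_cases h2 : (σ q.1 : ℕ) < T q.2 <;>
          simp [h1, h2])]
  rw [swExp_indicator]
  exact swProb_congr I _ _ (fun σ => by
    rw [swZ_zero_iff, swZ_zero_iff])

lemma swE11_nonneg (p q : Fin I × ℕ) : 0 ≤ swE11 I T p q := swProb_nonneg I _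
lemma swE00_nonneg (p q : Fin I × ℕ) : 0 ≤ swE00 I T p q := swProb_nonneg I _
lemma swE10_nonneg (p q : Fin I × ℕ) : 0 ≤ swE10 I T p q := swProb_nonneg I _

lemma swE10_self (p : Fin I × ℕ) : swE10 I T p p = 0 := by
  apply swProb_false
  intro σ h
  rw [h.1] at h
  exact absurd h.2 (by simp)

lemma swE11_self (hI : 0 < I) (p : Fin I × ℕ) (hT : T p.2 ≤ I) :
    swE11 I T p p = swE I T p.2 := by
  rw [← swExp_zz I T p p,
    swExp_congr I _ (fun σ => (swZ I T σ p.1 p.2 : ℝ))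
      (fun σ => by unfold swZ; by_cases h : (σ p.1 : ℕ) < T p.2 <;> simp [h]),
    swExp_z I T hI p.1 p.2 hT]

lemma swE00_self (hI : 0 < I) (p : Fin I × ℕ) (hT : T p.2 ≤ I) :
    swE00 I T p p = 1 - swE I T p.2 := by
  rw [← swExp_z00 I T p p,
    swExp_congr I _ (fun σ => 1 - (swZ I T σ p.1 p.2 : ℝ))
      (fun σ => by unfold swZ; by_cases h : (σ p.1 : ℕ) < T p.2 <;> simp [h]),
    swExp_omz I T hI p.1 p.2 hT]

end auxModel

section auxMain
variable (I J : ℕ) (T : ℕ → ℕ) (N : ℝ) (r1 r0 : Fin I → ℕ → ℝ)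

/-- summand of the HT estimator of the difference -/
def auxS (p : Fin I × ℕ) (σ : Equiv.Perm (Fin I)) : ℝ :=
  (swZ I T σ p.1 p.2 : ℝ) * r1 p.1 p.2 / swE I T p.2
    - (1 - (swZ I T σ p.1 p.2 : ℝ)) * r0 p.1 p.2 / (1 - swE I T p.2)

/-- per-pair expected contribution to the variance estimator -/
def auxW (p q : Fin I × ℕ) : ℝ :=
  (if p = q then swE I T p.2 * ((1 - swE I T p.2) / (swE I T p.2) ^ 2) * (r1 p.1 p.2) ^ 2 + (1 - swE I T p.2) * (swE I T p.2 / (1 - swE I T p.2) ^ 2) * (r0 p.1 p.2) ^ 2 else 0)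
  + (if p ≠ q ∧ 0 < swE11 I T p q then swE11 I T p q * ((swE11 I T p q - swE I T p.2 * swE I T q.2) / (swE11 I T p q * swE I T p.2 * swE I T q.2)) * r1 p.1 p.2 * r1 q.1 q.2 else 0)
  + (if p ≠ q ∧ swE11 I T p q = 0 then swE I T p.2 * (r1 p.1 p.2) ^ 2 / (2 * swE I T p.2) + swE I T q.2 * (r1 q.1 q.2) ^ 2 / (2 * swE I T q.2) else 0)
  + (if p ≠ q ∧ 0 < swE00 I T p q then swE00 I T p q * ((swE00 I T p q - (1 - swE I T p.2) * (1 - swE I T q.2)) / (swE00 I T p q * (1 - swE I T p.2) * (1 - swE I T q.2))) * r0 p.1 p.2 * r0 q.1 q.2 else 0)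
  + (if p ≠ q ∧ swE00 I T p q = 0 then (1 - swE I T p.2) * (r0 p.1 p.2) ^ 2 / (2 * (1 - swE I T p.2)) + (1 - swE I T q.2) * (r0 q.1 q.2) ^ 2 / (2 * (1 - swE I T q.2)) else 0)
  + (if swE10 I T p q = 0 then swE I T p.2 * (r1 p.1 p.2) ^ 2 / (2 * swE I T p.2) + (1 - swE I T q.2) * (r0 q.1 q.2) ^ 2 / (2 * (1 - swE I T q.2)) else 0)
  + (if swE10 I T q p = 0 then swE I T q.2 * (r1 q.1 q.2) ^ 2 / (2 * swE I T q.2) + (1 - swE I T p.2) * (r0 p.1 p.2) ^ 2 / (2 * (1 - swE I T p.2)) else 0)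
  - (if p ≠ q ∧ 0 < swE10 I T p q then swE10 I T p q * ((swE10 I T p q - swE I T p.2 * (1 - swE I T q.2)) / (swE10 I T p q * swE I T p.2 * (1 - swE I T q.2))) * r1 p.1 p.2 * r0 q.1 q.2 else 0)
  - (if q ≠ p ∧ 0 < swE10 I T q p then swE10 I T q p * ((swE10 I T q p - swE I T q.2 * (1 - swE I T p.2)) / (swE10 I T q p * swE I T q.2 * (1 - swE I T p.2))) * r1 q.1 q.2 * r0 p.1 p.2 else 0)

lemma aux_tau_diff (σ : Equiv.Perm (Fin I)) :
    tauHat1 I J T N r1 σ - tauHat0 I J T N r0 σ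
      = (1 / N) * ∑ p ∈ Finset.univ ×ˢ Finset.Icc 1 J, auxS I T r1 r0 p σ := by
  unfold tauHat1 tauHat0
  rw [Finset.sum_product, ← mul_sub]
  congr 1
  rw [← Finset.sum_sub_distrib]
  refine Finset.sum_congr rfl (fun i _ => ?_)
  rw [← Finset.sum_sub_distrib]
  exact Finset.sum_congr rfl (fun j _ => rfl)

lemma auxExpS (hI : 0 < I) (p : Fin I × ℕ) (hTp : T p.2 ≤ I) :
    swExp I (auxS I T r1 r0 p)
      = swE I T p.2 * (r1 p.1 p.2 / swE I T p.2)
        - (1 - swE I T p.2) * (r0 p.1 p.2 / (1 - swE I T p.2)) := by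
  unfold auxS
  rw [swExp_congr I _
      (fun σ => (swZ I T σ p.1 p.2 : ℝ) * (r1 p.1 p.2 / swE I T p.2)
        - (1 - (swZ I T σ p.1 p.2 : ℝ)) * (r0 p.1 p.2 / (1 - swE I T p.2)))
      (fun σ => by ring)]
  rw [swExp_sub, swExp_mul_const, swExp_mul_const, swExp_z I T hI p.1 p.2 hTp,
    swExp_omz I T hI p.1 p.2 hTp]

lemma auxV_eq (hI : 0 < I) (p q : Fin I × ℕ) (hTp : T p.2 ≤ I) (hTq : T q.2 ≤ I) :
    swExp I (fun σ => auxS I T r1 r0 p σ * auxS I T r1 r0 q σ)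
      - swExp I (auxS I T r1 r0 p) * swExp I (auxS I T r1 r0 q)
    = swE11 I T p q * (r1 p.1 p.2 / swE I T p.2) * (r1 q.1 q.2 / swE I T q.2)
      - swE10 I T p q * (r1 p.1 p.2 / swE I T p.2) * (r0 q.1 q.2 / (1 - swE I T q.2))
      - swE10 I T q p * (r0 p.1 p.2 / (1 - swE I T p.2)) * (r1 q.1 q.2 / swE I T q.2)
      + swE00 I T p q * (r0 p.1 p.2 / (1 - swE I T p.2)) * (r0 q.1 q.2 / (1 - swE I T q.2))
      - (swE I T p.2 * (r1 p.1 p.2 / swE I T p.2) - (1 - swE I T p.2) * (r0 p.1 p.2 / (1 - swE I T p.2)))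
        * (swE I T q.2 * (r1 q.1 q.2 / swE I T q.2) - (1 - swE I T q.2) * (r0 q.1 q.2 / (1 - swE I T q.2))) := by
  have hpq : swExp I (fun σ => auxS I T r1 r0 p σ * auxS I T r1 r0 q σ)
      = (r1 p.1 p.2 / swE I T p.2 * (r1 q.1 q.2 / swE I T q.2)) * swE11 I T p q
        - (r1 p.1 p.2 / swE I T p.2 * (r0 q.1 q.2 / (1 - swE I T q.2))) * swE10 I T p q
        - (r0 p.1 p.2 / (1 - swE I T p.2) * (r1 q.1 q.2 / swE I T q.2)) * swE10 I T q p
        + (r0 p.1 p.2 / (1 - swE I T p.2) * (r0 q.1 q.2 / (1 - swE I T q.2))) * swE00 I T p q := by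
    rw [swExp_congr I _
        (fun σ => (r1 p.1 p.2 / swE I T p.2 * (r1 q.1 q.2 / swE I T q.2))
              * ((swZ I T σ p.1 p.2 : ℝ) * (swZ I T σ q.1 q.2 : ℝ))
            - (r1 p.1 p.2 / swE I T p.2 * (r0 q.1 q.2 / (1 - swE I T q.2)))
              * ((swZ I T σ p.1 p.2 : ℝ) * (1 - (swZ I T σ q.1 q.2 : ℝ)))
            - (r0 p.1 p.2 / (1 - swE I T p.2) * (r1 q.1 q.2 / swE I T q.2))
              * ((swZ I T σ q.1 q.2 : ℝ) * (1 - (swZ I T σ p.1 p.2 : ℝ)))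
            + (r0 p.1 p.2 / (1 - swE I T p.2) * (r0 q.1 q.2 / (1 - swE I T q.2)))
              * ((1 - (swZ I T σ p.1 p.2 : ℝ)) * (1 - (swZ I T σ q.1 q.2 : ℝ))))
        (fun σ => by unfold auxS; ring)]
    rw [swExp_comb4, swExp_zz, swExp_z10, swExp_z10, swExp_z00]
  rw [hpq, auxExpS I T r1 r0 hI p hTp, auxExpS I T r1 r0 hI q hTq]
  ring

end auxMain

section auxExp
variable (I J : ℕ) (T : ℕ → ℕ) (N : ℝ) (r1 r0 : Fin I → ℕ → ℝ)

lemma auxExpVar1 (hI : 0 < I) (hT : ∀ j ∈ Finset.Icc 1 J, T j ≤ I) :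
    swExp I (varHat1 I J T N r1)
      = 1 / N ^ 2 *
        ((∑ p ∈ Finset.univ ×ˢ Finset.Icc 1 J, swE I T p.2 * ((1 - swE I T p.2) / (swE I T p.2) ^ 2) * (r1 p.1 p.2) ^ 2)
          + (∑ p ∈ Finset.univ ×ˢ Finset.Icc 1 J, ∑ q ∈ Finset.univ ×ˢ Finset.Icc 1 J,
              if p ≠ q ∧ 0 < swE11 I T p q then swE11 I T p q * ((swE11 I T p q - swE I T p.2 * swE I T q.2) / (swE11 I T p q * swE I T p.2 * swE I T q.2)) * r1 p.1 p.2 * r1 q.1 q.2 else 0)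
          + (∑ p ∈ Finset.univ ×ˢ Finset.Icc 1 J, ∑ q ∈ Finset.univ ×ˢ Finset.Icc 1 J,
              if p ≠ q ∧ swE11 I T p q = 0 then swE I T p.2 * (r1 p.1 p.2) ^ 2 / (2 * swE I T p.2) + swE I T q.2 * (r1 q.1 q.2) ^ 2 / (2 * swE I T q.2) else 0)) := by
  unfold varHat1
  rw [swExp_const_mul, swExp_add, swExp_add]
  congr 1
  congr 1
  congr 1
  · rw [swExp_sum]
    refine Finset.sum_congr rfl (fun p hp => ?_)
    have hTp : T p.2 ≤ I := hT p.2 (Finset.mem_product.mp hp).2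
    rw [swExp_mul_const, swExp_mul_const, swExp_z I T hI p.1 p.2 hTp]
  · rw [swExp_sum]
    refine Finset.sum_congr rfl (fun p hp => ?_)
    rw [swExp_sum]
    refine Finset.sum_congr rfl (fun q hq => ?_)
    rw [swExp_if]
    by_cases h : p ≠ q ∧ 0 < swE11 I T p q
    · rw [if_pos h, if_pos h, swExp_mul_const, swExp_mul_const, swExp_mul_const, swExp_zz]
    · rw [if_neg h, if_neg h]
  · rw [swExp_sum]
    refine Finset.sum_congr rfl (fun p hp => ?_)
    have hTp : T p.2 ≤ I := hT p.2 (Finset.mem_product.mp hp).2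
    rw [swExp_sum]
    refine Finset.sum_congr rfl (fun q hq => ?_)
    have hTq : T q.2 ≤ I := hT q.2 (Finset.mem_product.mp hq).2
    rw [swExp_if]
    by_cases h : p ≠ q ∧ swE11 I T p q = 0
    · rw [if_pos h, if_pos h, swExp_add, swExp_div_const, swExp_mul_const,
        swExp_z I T hI p.1 p.2 hTp, swExp_div_const, swExp_mul_const,
        swExp_z I T hI q.1 q.2 hTq]
    · rw [if_neg h, if_neg h]

lemma auxExpVar0 (hI : 0 < I) (hT : ∀ j ∈ Finset.Icc 1 J, T j ≤ I) :
    swExp I (varHat0 I J T N r0)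
      = 1 / N ^ 2 *
        ((∑ p ∈ Finset.univ ×ˢ Finset.Icc 1 J, (1 - swE I T p.2) * (swE I T p.2 / (1 - swE I T p.2) ^ 2) * (r0 p.1 p.2) ^ 2)
          + (∑ p ∈ Finset.univ ×ˢ Finset.Icc 1 J, ∑ q ∈ Finset.univ ×ˢ Finset.Icc 1 J,
              if p ≠ q ∧ 0 < swE00 I T p q then swE00 I T p q * ((swE00 I T p q - (1 - swE I T p.2) * (1 - swE I T q.2)) / (swE00 I T p q * (1 - swE I T p.2) * (1 - swE I T q.2))) * r0 p.1 p.2 * r0 q.1 q.2 else 0)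
          + (∑ p ∈ Finset.univ ×ˢ Finset.Icc 1 J, ∑ q ∈ Finset.univ ×ˢ Finset.Icc 1 J,
              if p ≠ q ∧ swE00 I T p q = 0 then (1 - swE I T p.2) * (r0 p.1 p.2) ^ 2 / (2 * (1 - swE I T p.2)) + (1 - swE I T q.2) * (r0 q.1 q.2) ^ 2 / (2 * (1 - swE I T q.2)) else 0)) := by
  unfold varHat0
  rw [swExp_const_mul, swExp_add, swExp_add]
  congr 1
  congr 1
  congr 1
  · rw [swExp_sum]
    refine Finset.sum_congr rfl (fun p hp => ?_)
    have hTp : T p.2 ≤ I := hT p.2 (Finset.mem_product.mp hp).2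
    rw [swExp_mul_const, swExp_mul_const, swExp_omz I T hI p.1 p.2 hTp]
  · rw [swExp_sum]
    refine Finset.sum_congr rfl (fun p hp => ?_)
    rw [swExp_sum]
    refine Finset.sum_congr rfl (fun q hq => ?_)
    rw [swExp_if]
    by_cases h : p ≠ q ∧ 0 < swE00 I T p q
    · rw [if_pos h, if_pos h, swExp_mul_const, swExp_mul_const, swExp_mul_const, swExp_z00]
    · rw [if_neg h, if_neg h]
  · rw [swExp_sum]
    refine Finset.sum_congr rfl (fun p hp => ?_)
    have hTp : T p.2 ≤ I := hT p.2 (Finset.mem_product.mp hp).2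
    rw [swExp_sum]
    refine Finset.sum_congr rfl (fun q hq => ?_)
    have hTq : T q.2 ≤ I := hT q.2 (Finset.mem_product.mp hq).2
    rw [swExp_if]
    by_cases h : p ≠ q ∧ swE00 I T p q = 0
    · rw [if_pos h, if_pos h, swExp_add, swExp_div_const, swExp_mul_const,
        swExp_omz I T hI p.1 p.2 hTp, swExp_div_const, swExp_mul_const,
        swExp_omz I T hI q.1 q.2 hTq]
    · rw [if_neg h, if_neg h]

lemma auxExpCov (hI : 0 < I) (hT : ∀ j ∈ Finset.Icc 1 J, T j ≤ I) :
    swExp I (covHat I J T N r1 r0)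
      = -(1 / N ^ 2) *
          (∑ p ∈ Finset.univ ×ˢ Finset.Icc 1 J, ∑ q ∈ Finset.univ ×ˢ Finset.Icc 1 J,
            if swE10 I T p q = 0 then swE I T p.2 * (r1 p.1 p.2) ^ 2 / (2 * swE I T p.2) + (1 - swE I T q.2) * (r0 q.1 q.2) ^ 2 / (2 * (1 - swE I T q.2)) else 0)
        + 1 / N ^ 2 *
          (∑ p ∈ Finset.univ ×ˢ Finset.Icc 1 J, ∑ q ∈ Finset.univ ×ˢ Finset.Icc 1 J,
            if p ≠ q ∧ 0 < swE10 I T p q then swE10 I T p q * ((swE10 I T p q - swE I T p.2 * (1 - swE I T q.2)) / (swE10 I T p q * swE I T p.2 * (1 - swE I T q.2))) * r1 p.1 p.2 * r0 q.1 q.2 else 0) := by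
  unfold covHat
  rw [swExp_add, swExp_const_mul, swExp_const_mul]
  congr 1
  · congr 1
    rw [swExp_sum]
    refine Finset.sum_congr rfl (fun p hp => ?_)
    have hTp : T p.2 ≤ I := hT p.2 (Finset.mem_product.mp hp).2
    rw [swExp_sum]
    refine Finset.sum_congr rfl (fun q hq => ?_)
    have hTq : T q.2 ≤ I := hT q.2 (Finset.mem_product.mp hq).2
    rw [swExp_if]
    by_cases h : swE10 I T p q = 0
    · rw [if_pos h, if_pos h, swExp_add, swExp_div_const, swExp_mul_const,
        swExp_z I T hI p.1 p.2 hTp, swExp_div_const, swExp_mul_const,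
        swExp_omz I T hI q.1 q.2 hTq]
    · rw [if_neg h, if_neg h]
  · congr 1
    rw [swExp_sum]
    refine Finset.sum_congr rfl (fun p hp => ?_)
    rw [swExp_sum]
    refine Finset.sum_congr rfl (fun q hq => ?_)
    rw [swExp_if]
    by_cases h : p ≠ q ∧ 0 < swE10 I T p q
    · rw [if_pos h, if_pos h, swExp_mul_const, swExp_mul_const, swExp_mul_const, swExp_z10]
    · rw [if_neg h, if_neg h]

end auxExp

section auxTotal
variable (I J : ℕ) (T : ℕ → ℕ) (N : ℝ) (r1 r0 : Fin I → ℕ → ℝ)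

lemma auxExpTotal (hI : 0 < I) (hT : ∀ j ∈ Finset.Icc 1 J, T j ≤ I) :
    swExp I (fun σ =>
        varHat1 I J T N r1 σ + varHat0 I J T N r0 σ - 2 * covHat I J T N r1 r0 σ)
      = 1 / N ^ 2 * ∑ p ∈ Finset.univ ×ˢ Finset.Icc 1 J, ∑ q ∈ Finset.univ ×ˢ Finset.Icc 1 J, auxW I T r1 r0 p q := by
  rw [swExp_sub I (fun σ => varHat1 I J T N r1 σ + varHat0 I J T N r0 σ)
      (fun σ => 2 * covHat I J T N r1 r0 σ),
    swExp_add I (varHat1 I J T N r1) (varHat0 I J T N r0),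
    swExp_const_mul I 2 (covHat I J T N r1 r0),
    auxExpVar1 I J T N r1 hI hT, auxExpVar0 I J T N r0 hI hT,
    auxExpCov I J T N r1 r0 hI hT]
  have e1 : (∑ p ∈ Finset.univ ×ˢ Finset.Icc 1 J, ∑ q ∈ Finset.univ ×ˢ Finset.Icc 1 J,
        if p = q then swE I T p.2 * ((1 - swE I T p.2) / (swE I T p.2) ^ 2) * (r1 p.1 p.2) ^ 2 + (1 - swE I T p.2) * (swE I T p.2 / (1 - swE I T p.2) ^ 2) * (r0 p.1 p.2) ^ 2 else 0)
      = (∑ p ∈ Finset.univ ×ˢ Finset.Icc 1 J, swE I T p.2 * ((1 - swE I T p.2) / (swE I T p.2) ^ 2) * (r1 p.1 p.2) ^ 2) + (∑ p ∈ Finset.univ ×ˢ Finset.Icc 1 J, (1 - swE I T p.2) * (swE I T p.2 / (1 - swE I T p.2) ^ 2) * (r0 p.1 p.2) ^ 2) := by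
    rw [← Finset.sum_add_distrib]
    refine Finset.sum_congr rfl (fun p hp => ?_)
    rw [Finset.sum_ite_eq, if_pos hp]
  have e7 : (∑ p ∈ Finset.univ ×ˢ Finset.Icc 1 J, ∑ q ∈ Finset.univ ×ˢ Finset.Icc 1 J,
        if swE10 I T q p = 0 then
          swE I T q.2 * (r1 q.1 q.2) ^ 2 / (2 * swE I T q.2)
            + (1 - swE I T p.2) * (r0 p.1 p.2) ^ 2 / (2 * (1 - swE I T p.2))
        else 0)
      = (∑ p ∈ Finset.univ ×ˢ Finset.Icc 1 J, ∑ q ∈ Finset.univ ×ˢ Finset.Icc 1 J,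
        if swE10 I T p q = 0 then
          swE I T p.2 * (r1 p.1 p.2) ^ 2 / (2 * swE I T p.2)
            + (1 - swE I T q.2) * (r0 q.1 q.2) ^ 2 / (2 * (1 - swE I T q.2))
        else 0) := Finset.sum_comm
  have e9 : (∑ p ∈ Finset.univ ×ˢ Finset.Icc 1 J, ∑ q ∈ Finset.univ ×ˢ Finset.Icc 1 J,
        if q ≠ p ∧ 0 < swE10 I T q p then
          swE10 I T q p * ((swE10 I T q p - swE I T q.2 * (1 - swE I T p.2)) /
            (swE10 I T q p * swE I T q.2 * (1 - swE I T p.2))) * r1 q.1 q.2 * r0 p.1 p.2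
        else 0)
      = (∑ p ∈ Finset.univ ×ˢ Finset.Icc 1 J, ∑ q ∈ Finset.univ ×ˢ Finset.Icc 1 J,
        if p ≠ q ∧ 0 < swE10 I T p q then
          swE10 I T p q * ((swE10 I T p q - swE I T p.2 * (1 - swE I T q.2)) /
            (swE10 I T p q * swE I T p.2 * (1 - swE I T q.2))) * r1 p.1 p.2 * r0 q.1 q.2
        else 0) := Finset.sum_comm
  have hW : (∑ p ∈ Finset.univ ×ˢ Finset.Icc 1 J, ∑ q ∈ Finset.univ ×ˢ Finset.Icc 1 J, auxW I T r1 r0 p q)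
      = (∑ p ∈ Finset.univ ×ˢ Finset.Icc 1 J, ∑ q ∈ Finset.univ ×ˢ Finset.Icc 1 J,
          if p = q then swE I T p.2 * ((1 - swE I T p.2) / (swE I T p.2) ^ 2) * (r1 p.1 p.2) ^ 2 + (1 - swE I T p.2) * (swE I T p.2 / (1 - swE I T p.2) ^ 2) * (r0 p.1 p.2) ^ 2 else 0)
        + (∑ p ∈ Finset.univ ×ˢ Finset.Icc 1 J, ∑ q ∈ Finset.univ ×ˢ Finset.Icc 1 J,
            if p ≠ q ∧ 0 < swE11 I T p q then
              swE11 I T p q * ((swE11 I T p q - swE I T p.2 * swE I T q.2) /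
                (swE11 I T p q * swE I T p.2 * swE I T q.2)) * r1 p.1 p.2 * r1 q.1 q.2
            else 0)
        + (∑ p ∈ Finset.univ ×ˢ Finset.Icc 1 J, ∑ q ∈ Finset.univ ×ˢ Finset.Icc 1 J,
            if p ≠ q ∧ swE11 I T p q = 0 then
              swE I T p.2 * (r1 p.1 p.2) ^ 2 / (2 * swE I T p.2)
                + swE I T q.2 * (r1 q.1 q.2) ^ 2 / (2 * swE I T q.2)
            else 0)
        + (∑ p ∈ Finset.univ ×ˢ Finset.Icc 1 J, ∑ q ∈ Finset.univ ×ˢ Finset.Icc 1 J,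
            if p ≠ q ∧ 0 < swE00 I T p q then
              swE00 I T p q * ((swE00 I T p q - (1 - swE I T p.2) * (1 - swE I T q.2)) /
                (swE00 I T p q * (1 - swE I T p.2) * (1 - swE I T q.2))) * r0 p.1 p.2 * r0 q.1 q.2
            else 0)
        + (∑ p ∈ Finset.univ ×ˢ Finset.Icc 1 J, ∑ q ∈ Finset.univ ×ˢ Finset.Icc 1 J,
            if p ≠ q ∧ swE00 I T p q = 0 then
              (1 - swE I T p.2) * (r0 p.1 p.2) ^ 2 / (2 * (1 - swE I T p.2))
                + (1 - swE I T q.2) * (r0 q.1 q.2) ^ 2 / (2 * (1 - swE I T q.2))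
            else 0)
        + (∑ p ∈ Finset.univ ×ˢ Finset.Icc 1 J, ∑ q ∈ Finset.univ ×ˢ Finset.Icc 1 J,
            if swE10 I T p q = 0 then
              swE I T p.2 * (r1 p.1 p.2) ^ 2 / (2 * swE I T p.2)
                + (1 - swE I T q.2) * (r0 q.1 q.2) ^ 2 / (2 * (1 - swE I T q.2))
            else 0)
        + (∑ p ∈ Finset.univ ×ˢ Finset.Icc 1 J, ∑ q ∈ Finset.univ ×ˢ Finset.Icc 1 J,
            if swE10 I T q p = 0 then
              swE I T q.2 * (r1 q.1 q.2) ^ 2 / (2 * swE I T q.2)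
                + (1 - swE I T p.2) * (r0 p.1 p.2) ^ 2 / (2 * (1 - swE I T p.2))
            else 0)
        - (∑ p ∈ Finset.univ ×ˢ Finset.Icc 1 J, ∑ q ∈ Finset.univ ×ˢ Finset.Icc 1 J,
            if p ≠ q ∧ 0 < swE10 I T p q then
              swE10 I T p q * ((swE10 I T p q - swE I T p.2 * (1 - swE I T q.2)) /
                (swE10 I T p q * swE I T p.2 * (1 - swE I T q.2))) * r1 p.1 p.2 * r0 q.1 q.2
            else 0)
        - (∑ p ∈ Finset.univ ×ˢ Finset.Icc 1 J, ∑ q ∈ Finset.univ ×ˢ Finset.Icc 1 J,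
            if q ≠ p ∧ 0 < swE10 I T q p then
              swE10 I T q p * ((swE10 I T q p - swE I T q.2 * (1 - swE I T p.2)) /
                (swE10 I T q p * swE I T q.2 * (1 - swE I T p.2))) * r1 q.1 q.2 * r0 p.1 p.2
            else 0) := by
    unfold auxW
    simp only [Finset.sum_add_distrib, Finset.sum_sub_distrib]
  rw [hW, e1, e7, e9]
  ring

end auxTotal

section auxPairSec
variable (I : ℕ) (T : ℕ → ℕ) (r1 r0 : Fin I → ℕ → ℝ)

set_option maxHeartbeats 1000000 in
lemma auxPair (hI : 0 < I) (p q : Fin I × ℕ) (hTp : T p.2 ≤ I) (hTq : T q.2 ≤ I)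
    (hep : 0 < swE I T p.2) (hep1 : swE I T p.2 < 1)
    (heq : 0 < swE I T q.2) (heq1 : swE I T q.2 < 1) :
    swExp I (fun σ => auxS I T r1 r0 p σ * auxS I T r1 r0 q σ)
      - swExp I (auxS I T r1 r0 p) * swExp I (auxS I T r1 r0 q)
      ≤ auxW I T r1 r0 p q := by
  rw [auxV_eq I T r1 r0 hI p q hTp hTq]
  unfold auxW
  have hfp : (0:ℝ) < 1 - swE I T p.2 := by linarith
  have hfq : (0:ℝ) < 1 - swE I T q.2 := by linarith
  have hep' := ne_of_gt hep
  have heq' := ne_of_gt heq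
  have hfp' := ne_of_gt hfp
  have hfq' := ne_of_gt hfq
  by_cases hpq : p = q
  · subst hpq
    rw [swE11_self I T hI p hTp, swE00_self I T hI p hTp, swE10_self I T p]
    rw [if_pos rfl, if_neg (fun h => h.1 rfl), if_neg (fun h => h.1 rfl),
      if_neg (fun h => h.1 rfl), if_neg (fun h => h.1 rfl), if_pos rfl,
      if_neg (fun h => h.1 rfl)]
    have key : ∀ A B e : ℝ, 0 < e → e < 1 →
        e * (A / e) * (A / e) - 0 * (A / e) * (B / (1 - e))
          - 0 * (B / (1 - e)) * (A / e)
          + (1 - e) * (B / (1 - e)) * (B / (1 - e))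
          - (e * (A / e) - (1 - e) * (B / (1 - e)))
            * (e * (A / e) - (1 - e) * (B / (1 - e)))
        ≤ e * ((1 - e) / e ^ 2) * A ^ 2 + (1 - e) * (e / (1 - e) ^ 2) * B ^ 2
          + (e * A ^ 2 / (2 * e) + (1 - e) * B ^ 2 / (2 * (1 - e)))
          + (e * A ^ 2 / (2 * e) + (1 - e) * B ^ 2 / (2 * (1 - e))) := by
      intro A B e he he1
      have hf : (0:ℝ) < 1 - e := by linarith
      have he' := ne_of_gt he
      have hf' := ne_of_gt hf
      have h1 : e * (A / e) = A := by field_simp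
      have h2 : (1 - e) * (B / (1 - e)) = B := by field_simp
      have h3 : e * (A / e) * (A / e) = A ^ 2 / e := by field_simp
      have h4 : (1 - e) * (B / (1 - e)) * (B / (1 - e)) = B ^ 2 / (1 - e) := by field_simp
      have h5 : e * ((1 - e) / e ^ 2) * A ^ 2 = A ^ 2 / e - A ^ 2 := by field_simp
      have h6 : (1 - e) * (e / (1 - e) ^ 2) * B ^ 2 = B ^ 2 / (1 - e) - B ^ 2 := by
        field_simp; ring
      have h7 : e * A ^ 2 / (2 * e) = A ^ 2 / 2 := by field_simp
      have h8 : (1 - e) * B ^ 2 / (2 * (1 - e)) = B ^ 2 / 2 := by field_simp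
      rw [h3, h4, h5, h6, h7, h8, h1, h2]
      nlinarith [sq_nonneg (A - B)]
    have h := key (r1 p.1 p.2) (r0 p.1 p.2) (swE I T p.2) hep hep1
    linarith [h]
  · rw [if_neg hpq]
    have h11 := swE11_nonneg I T p q
    have h00 := swE00_nonneg I T p q
    have h10 := swE10_nonneg I T p q
    have h01 := swE10_nonneg I T q p
    have G11 : swE11 I T p q * (r1 p.1 p.2 / swE I T p.2) * (r1 q.1 q.2 / swE I T q.2)
          - r1 p.1 p.2 * r1 q.1 q.2
        ≤ (if p ≠ q ∧ 0 < swE11 I T p q then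
              swE11 I T p q * ((swE11 I T p q - swE I T p.2 * swE I T q.2) /
                (swE11 I T p q * swE I T p.2 * swE I T q.2)) * r1 p.1 p.2 * r1 q.1 q.2
            else 0)
          + (if p ≠ q ∧ swE11 I T p q = 0 then
              swE I T p.2 * (r1 p.1 p.2) ^ 2 / (2 * swE I T p.2)
                + swE I T q.2 * (r1 q.1 q.2) ^ 2 / (2 * swE I T q.2)
            else 0) := by
      rcases lt_or_eq_of_le h11 with h | h
      · rw [if_pos ⟨hpq, h⟩, if_neg (fun hc => (ne_of_gt h) hc.2), add_zero]
        have hx := ne_of_gt h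
        apply le_of_eq
        field_simp
      · rw [if_neg (fun hc => by have hx := hc.2; rw [← h] at hx; exact lt_irrefl 0 hx), if_pos ⟨hpq, h.symm⟩, zero_add, ← h]
        have hA : swE I T p.2 * (r1 p.1 p.2) ^ 2 / (2 * swE I T p.2) = (r1 p.1 p.2) ^ 2 / 2 := by
          field_simp
        have hA' : swE I T q.2 * (r1 q.1 q.2) ^ 2 / (2 * swE I T q.2) = (r1 q.1 q.2) ^ 2 / 2 := by
          field_simp
        rw [hA, hA']
        simp only [zero_mul, zero_sub]
        nlinarith [sq_nonneg (r1 p.1 p.2 + r1 q.1 q.2)]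
    have G00 : swE00 I T p q * (r0 p.1 p.2 / (1 - swE I T p.2)) * (r0 q.1 q.2 / (1 - swE I T q.2))
          - r0 p.1 p.2 * r0 q.1 q.2
        ≤ (if p ≠ q ∧ 0 < swE00 I T p q then
              swE00 I T p q * ((swE00 I T p q - (1 - swE I T p.2) * (1 - swE I T q.2)) /
                (swE00 I T p q * (1 - swE I T p.2) * (1 - swE I T q.2))) * r0 p.1 p.2 * r0 q.1 q.2
            else 0)
          + (if p ≠ q ∧ swE00 I T p q = 0 then
              (1 - swE I T p.2) * (r0 p.1 p.2) ^ 2 / (2 * (1 - swE I T p.2))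
                + (1 - swE I T q.2) * (r0 q.1 q.2) ^ 2 / (2 * (1 - swE I T q.2))
            else 0) := by
      rcases lt_or_eq_of_le h00 with h | h
      · rw [if_pos ⟨hpq, h⟩, if_neg (fun hc => (ne_of_gt h) hc.2), add_zero]
        have hx := ne_of_gt h
        apply le_of_eq
        field_simp
      · rw [if_neg (fun hc => by have hx := hc.2; rw [← h] at hx; exact lt_irrefl 0 hx), if_pos ⟨hpq, h.symm⟩, zero_add, ← h]
        have hA : (1 - swE I T p.2) * (r0 p.1 p.2) ^ 2 / (2 * (1 - swE I T p.2))
            = (r0 p.1 p.2) ^ 2 / 2 := by field_simp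
        have hA' : (1 - swE I T q.2) * (r0 q.1 q.2) ^ 2 / (2 * (1 - swE I T q.2))
            = (r0 q.1 q.2) ^ 2 / 2 := by field_simp
        rw [hA, hA']
        simp only [zero_mul, zero_sub]
        nlinarith [sq_nonneg (r0 p.1 p.2 + r0 q.1 q.2)]
    have G10 : r1 p.1 p.2 * r0 q.1 q.2
          - swE10 I T p q * (r1 p.1 p.2 / swE I T p.2) * (r0 q.1 q.2 / (1 - swE I T q.2))
        ≤ (if swE10 I T p q = 0 then
              swE I T p.2 * (r1 p.1 p.2) ^ 2 / (2 * swE I T p.2)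
                + (1 - swE I T q.2) * (r0 q.1 q.2) ^ 2 / (2 * (1 - swE I T q.2))
            else 0)
          - (if p ≠ q ∧ 0 < swE10 I T p q then
              swE10 I T p q * ((swE10 I T p q - swE I T p.2 * (1 - swE I T q.2)) /
                (swE10 I T p q * swE I T p.2 * (1 - swE I T q.2))) * r1 p.1 p.2 * r0 q.1 q.2
            else 0) := by
      rcases lt_or_eq_of_le h10 with h | h
      · rw [if_neg (ne_of_gt h), if_pos ⟨hpq, h⟩, zero_sub]
        have hx := ne_of_gt h
        apply le_of_eq
        field_simp
        ring
      · rw [if_pos h.symm, if_neg (fun hc => by have hx := hc.2; rw [← h] at hx; exact lt_irrefl 0 hx), sub_zero, ← h]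
        have hA : swE I T p.2 * (r1 p.1 p.2) ^ 2 / (2 * swE I T p.2) = (r1 p.1 p.2) ^ 2 / 2 := by
          field_simp
        have hA' : (1 - swE I T q.2) * (r0 q.1 q.2) ^ 2 / (2 * (1 - swE I T q.2))
            = (r0 q.1 q.2) ^ 2 / 2 := by field_simp
        rw [hA, hA']
        simp only [zero_mul, sub_zero]
        nlinarith [sq_nonneg (r1 p.1 p.2 - r0 q.1 q.2)]
    have G01 : r0 p.1 p.2 * r1 q.1 q.2
          - swE10 I T q p * (r0 p.1 p.2 / (1 - swE I T p.2)) * (r1 q.1 q.2 / swE I T q.2)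
        ≤ (if swE10 I T q p = 0 then
              swE I T q.2 * (r1 q.1 q.2) ^ 2 / (2 * swE I T q.2)
                + (1 - swE I T p.2) * (r0 p.1 p.2) ^ 2 / (2 * (1 - swE I T p.2))
            else 0)
          - (if q ≠ p ∧ 0 < swE10 I T q p then
              swE10 I T q p * ((swE10 I T q p - swE I T q.2 * (1 - swE I T p.2)) /
                (swE10 I T q p * swE I T q.2 * (1 - swE I T p.2))) * r1 q.1 q.2 * r0 p.1 p.2
            else 0) := by
      rcases lt_or_eq_of_le h01 with h | h
      · rw [if_neg (ne_of_gt h), if_pos ⟨Ne.symm hpq, h⟩, zero_sub]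
        have hx := ne_of_gt h
        apply le_of_eq
        field_simp
        ring
      · rw [if_pos h.symm, if_neg (fun hc => by have hx := hc.2; rw [← h] at hx; exact lt_irrefl 0 hx), sub_zero, ← h]
        have hA : swE I T q.2 * (r1 q.1 q.2) ^ 2 / (2 * swE I T q.2) = (r1 q.1 q.2) ^ 2 / 2 := by
          field_simp
        have hA' : (1 - swE I T p.2) * (r0 p.1 p.2) ^ 2 / (2 * (1 - swE I T p.2))
            = (r0 p.1 p.2) ^ 2 / 2 := by field_simp
        rw [hA, hA']
        simp only [zero_mul, sub_zero]
        nlinarith [sq_nonneg (r1 q.1 q.2 - r0 p.1 p.2)]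
    have hV : swE11 I T p q * (r1 p.1 p.2 / swE I T p.2) * (r1 q.1 q.2 / swE I T q.2)
          - swE10 I T p q * (r1 p.1 p.2 / swE I T p.2) * (r0 q.1 q.2 / (1 - swE I T q.2))
          - swE10 I T q p * (r0 p.1 p.2 / (1 - swE I T p.2)) * (r1 q.1 q.2 / swE I T q.2)
          + swE00 I T p q * (r0 p.1 p.2 / (1 - swE I T p.2)) * (r0 q.1 q.2 / (1 - swE I T q.2))
          - (swE I T p.2 * (r1 p.1 p.2 / swE I T p.2)
              - (1 - swE I T p.2) * (r0 p.1 p.2 / (1 - swE I T p.2)))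
            * (swE I T q.2 * (r1 q.1 q.2 / swE I T q.2)
              - (1 - swE I T q.2) * (r0 q.1 q.2 / (1 - swE I T q.2)))
        = (swE11 I T p q * (r1 p.1 p.2 / swE I T p.2) * (r1 q.1 q.2 / swE I T q.2)
            - r1 p.1 p.2 * r1 q.1 q.2)
          + (swE00 I T p q * (r0 p.1 p.2 / (1 - swE I T p.2)) * (r0 q.1 q.2 / (1 - swE I T q.2))
            - r0 p.1 p.2 * r0 q.1 q.2)
          + (r1 p.1 p.2 * r0 q.1 q.2
            - swE10 I T p q * (r1 p.1 p.2 / swE I T p.2) * (r0 q.1 q.2 / (1 - swE I T q.2)))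
          + (r0 p.1 p.2 * r1 q.1 q.2
            - swE10 I T q p * (r0 p.1 p.2 / (1 - swE I T p.2)) * (r1 q.1 q.2 / swE I T q.2)) := by
      field_simp
      ring
    rw [hV]
    linarith [G11, G00, G10, G01]

end auxPairSec


theorem statement17
    (I J : ℕ) (hI : 2 ≤ I) (hJ : 1 ≤ J)
    (T : ℕ → ℕ)
    (hmono : ∀ j j', 1 ≤ j → j ≤ j' → j' ≤ J → T j ≤ T j')
    (hlb : ∀ j, 1 ≤ j → j ≤ J → 1 ≤ T j)
    (hub : ∀ j, 1 ≤ j → j ≤ J → T j ≤ I - 1)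
    (N : ℝ) (hN : 0 < N) (r1 r0 : Fin I → ℕ → ℝ) :
    swVar I (fun σ => tauHat1 I J T N r1 σ - tauHat0 I J T N r0 σ)
      ≤ swExp I (fun σ =>
          varHat1 I J T N r1 σ + varHat0 I J T N r0 σ - 2 * covHat I J T N r1 r0 σ) := by
  have hI0 : 0 < I := by omega
  have hTle : ∀ j ∈ Finset.Icc 1 J, T j ≤ I := by
    intro j hj
    rw [Finset.mem_Icc] at hj
    have := hub j hj.1 hj.2
    omega
  have hepos : ∀ j ∈ Finset.Icc 1 J, 0 < swE I T j := by
    intro j hj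
    rw [Finset.mem_Icc] at hj
    have h1 := hlb j hj.1 hj.2
    unfold swE
    apply div_pos
    · exact_mod_cast h1
    · exact_mod_cast hI0
  have helt : ∀ j ∈ Finset.Icc 1 J, swE I T j < 1 := by
    intro j hj
    rw [Finset.mem_Icc] at hj
    have h2 := hub j hj.1 hj.2
    unfold swE
    rw [div_lt_one (by exact_mod_cast hI0)]
    exact_mod_cast (by omega : T j < I)
  have hfun : (fun σ => tauHat1 I J T N r1 σ - tauHat0 I J T N r0 σ)
      = fun σ => (1 / N) * ∑ p ∈ Finset.univ ×ˢ Finset.Icc 1 J, auxS I T r1 r0 p σ :=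
    funext (aux_tau_diff I J T N r1 r0)
  rw [hfun, swVar_const_mul, swVar_sum, auxExpTotal I J T N r1 r0 hI0 hTle]
  have hNN : (1 / N) ^ 2 = 1 / N ^ 2 := by rw [div_pow, one_pow]
  rw [hNN]
  apply mul_le_mul_of_nonneg_left _ (by positivity)
  apply Finset.sum_le_sum
  intro p hp
  apply Finset.sum_le_sum
  intro q hq
  have hp2 := (Finset.mem_product.mp hp).2
  have hq2 := (Finset.mem_product.mp hq).2
  exact auxPair I T r1 r0 hI0 p q (hTle _ hp2) (hTle _ hq2)
    (hepos _ hp2) (helt _ hp2) (hepos _ hq2) (helt _ hq2)
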